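/- Let a, d, k be positive integers with gcd(a, d) = 1 and 2 ≤ k ≤ a − 1, let S = ⟨a, a+d, …, a+kd⟩, and write a = q k + r with 0 ≤ r < k. Suppose r = 0. Then for every integer x ∉ {0, a, a + kd, a + (a + kd)}: μ_S(x) = μ_S(x − q(a+kd)) + ∑_{i=1}^{k−1} ( μ_S(x − (a+id) − q(a+kd)) − μ_S(x − (a+id)) ). -/

import Mathlib

open Classical in
/-- The Möbius function of the locally finite poset `(ℤ, ≤_S)` where `x ≤_S y ↔ y - x ∈ S`. -/
noncomputable def mobius2 (S : Set ℤ) (a b : ℤ) : ℤ :=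
  if a = b then 1
  else if b - a ∈ S then
    - ∑ c ∈ (Finset.Ico a b).attach,
        (if ((c : ℤ) - a ∈ S ∧ b - (c : ℤ) ∈ S) then mobius2 S a (c : ℤ) else 0)
  else 0
termination_by (b - a).toNat
decreasing_by
  have := c.2
  rw [Finset.mem_Ico] at this
  omega

/-- The reduced Möbius function `μ_S(x) = μ_S(0, x)`. -/
noncomputable def mobiusRed (S : Set ℤ) (x : ℤ) : ℤ := mobius2 S 0 x

open Classical

-- μ vanishes outside S (given 0 ∈ S)
lemma mu_not_mem (S : Set ℤ) (h0 : (0:ℤ) ∈ S) {z : ℤ} (hz : z ∉ S) :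
    mobiusRed S z = 0 := by
  have hz0 : z ≠ 0 := by rintro rfl; exact hz h0
  rw [mobiusRed, mobius2]
  simp [Ne.symm hz0, hz]

-- the fundamental convolution identity
lemma conv_eq (S : Set ℤ) (h0 : (0:ℤ) ∈ S) (hnn : ∀ z ∈ S, (0:ℤ) ≤ z)
    (hadd : ∀ x ∈ S, ∀ y ∈ S, x + y ∈ S) (z : ℤ) :
    (∑ c ∈ Finset.Icc 0 z, (if ((c:ℤ) ∈ S ∧ z - c ∈ S) then mobiusRed S c else 0))
      = if z = 0 then 1 else 0 := by
  by_cases hz0 : z = 0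
  · subst hz0
    have : mobiusRed S 0 = 1 := by rw [mobiusRed, mobius2]; simp
    simp [h0, this]
  · simp only [hz0, if_false]
    by_cases hzS : z ∈ S
    · have hzpos : 0 < z := lt_of_le_of_ne (hnn z hzS) (Ne.symm hz0)
      rw [← Finset.Ico_insert_right (le_of_lt hzpos),
        Finset.sum_insert (by simp)]
      have h1 : (if (z ∈ S ∧ z - z ∈ S) then mobiusRed S z else 0) = mobiusRed S z := by
        simp [hzS, h0]
      rw [h1]
      have h2 : mobiusRed S z
          = - ∑ c ∈ Finset.Ico 0 z, (if ((c:ℤ) ∈ S ∧ z - c ∈ S) then mobiusRed S c else 0) := by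
        rw [mobiusRed, mobius2]
        simp only [Ne.symm hz0, if_false, sub_zero, hzS, if_true]
        rw [← Finset.sum_attach (Finset.Ico 0 z)
          (fun c => if ((c:ℤ) ∈ S ∧ z - c ∈ S) then mobiusRed S c else 0)]
        simp [mobiusRed]
      rw [h2]; ring
    · apply Finset.sum_eq_zero
      intro c hc
      rw [if_neg]
      rintro ⟨h1, h2⟩
      exact hzS (by simpa using hadd c h1 _ h2)

section SG

variable (a d k : ℕ) (S : Set ℤ)

lemma zero_memS
    (hS : S = {z : ℤ | ∃ c : Fin (k + 1) → ℕ,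
      z = ∑ i, (c i : ℤ) * ((a : ℤ) + (i : ℕ) * (d : ℤ))}) : (0:ℤ) ∈ S := by
  rw [hS]; exact ⟨0, by simp⟩

lemma nonneg_memS
    (hS : S = {z : ℤ | ∃ c : Fin (k + 1) → ℕ,
      z = ∑ i, (c i : ℤ) * ((a : ℤ) + (i : ℕ) * (d : ℤ))}) :
    ∀ z ∈ S, (0:ℤ) ≤ z := by
  rw [hS]
  rintro z ⟨c, rfl⟩
  apply Finset.sum_nonneg
  intro i _
  positivity

lemma add_memS
    (hS : S = {z : ℤ | ∃ c : Fin (k + 1) → ℕ,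
      z = ∑ i, (c i : ℤ) * ((a : ℤ) + (i : ℕ) * (d : ℤ))}) :
    ∀ x ∈ S, ∀ y ∈ S, x + y ∈ S := by
  rw [hS]
  rintro x ⟨c1, rfl⟩ y ⟨c2, rfl⟩
  refine ⟨c1 + c2, ?_⟩
  rw [← Finset.sum_add_distrib]
  apply Finset.sum_congr rfl
  intro i _
  simp only [Pi.add_apply]
  push_cast
  ring

lemma memS_iff
    (hS : S = {z : ℤ | ∃ c : Fin (k + 1) → ℕ,
      z = ∑ i, (c i : ℤ) * ((a : ℤ) + (i : ℕ) * (d : ℤ))}) (z : ℤ) :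
    z ∈ S ↔ ∃ l m : ℕ, m ≤ k * l ∧ z = l * a + m * d := by
  constructor
  · rw [hS]
    rintro ⟨c, rfl⟩
    refine ⟨∑ i, c i, ∑ i : Fin (k+1), (i : ℕ) * c i, ?_, ?_⟩
    · rw [Finset.mul_sum]
      apply Finset.sum_le_sum
      intro i _
      exact Nat.mul_le_mul_right _ (Nat.le_of_lt_succ i.2)
    · push_cast
      rw [Finset.sum_mul, Finset.sum_mul, ← Finset.sum_add_distrib]
      apply Finset.sum_congr rfl
      intro i _
      ring
  · have hgen : ∀ e : ℕ, e ≤ k → ((a:ℤ) + e * d) ∈ S := by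
      intro e he
      rw [hS]
      refine ⟨fun i => if i = (⟨e, by omega⟩ : Fin (k+1)) then 1 else 0, ?_⟩
      rw [Finset.sum_eq_single (⟨e, by omega⟩ : Fin (k+1))]
      · simp
      · intro b _ hb
        simp [hb]
      · simp
    rintro ⟨l, m, hm, rfl⟩
    induction l generalizing m with
    | zero =>
        simp only [Nat.le_zero, Nat.mul_zero] at hm
        subst hm
        simpa using zero_memS a d k S hS
    | succ n ih =>
        have h1 : m - min m k ≤ k * n := by
          rcases Nat.le_total k m with h | h
          · simp only [min_eq_right h] at *
            have hk1 : k * (n+1) = k * n + k := by ring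
            omega
          · simp [min_eq_left h]
        have h2 : ((n+1 : ℕ) : ℤ) * a + (m : ℕ) * d
            = ((a:ℤ) + (min m k) * d) + ((n:ℤ) * a + ((m - min m k : ℕ) : ℤ) * d) := by
          have : ((m - min m k : ℕ) : ℤ) = (m : ℤ) - (min m k : ℤ) := by
            have := Nat.min_le_left m k
            push_cast [Nat.cast_sub this]
            ring
          rw [this]
          push_cast
          ring
        rw [h2]
        exact add_memS a d k S hS _ (hgen _ (Nat.min_le_right m k)) _ (ih _ h1)

lemma rep_unique (ha : 0 < a) (hd : 0 < d) (hgcd : Nat.gcd a d = 1)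
    (l1 l2 : ℤ) (u1 u2 : ℕ) (hu1 : u1 < a) (hu2 : u2 < a)
    (h : l1 * a + u1 * d = l2 * a + u2 * d) : l1 = l2 ∧ u1 = u2 := by
  have hcop : IsCoprime (a : ℤ) (d : ℤ) := by
    rw [Int.isCoprime_iff_gcd_eq_one]
    simpa using hgcd
  have hdvd : (a : ℤ) ∣ ((u2 : ℤ) - u1) * d := ⟨l1 - l2, by linarith⟩
  have hdvd2 : (a : ℤ) ∣ ((u2 : ℤ) - u1) := (IsCoprime.dvd_of_dvd_mul_right hcop) hdvd
  obtain ⟨t, ht⟩ := hdvd2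
  have ht0 : t = 0 := by
    rcases lt_trichotomy t 0 with h' | h' | h'
    · nlinarith [Int.ofNat_lt.2 hu1, Int.ofNat_lt.2 hu2]
    · exact h'
    · nlinarith [Int.ofNat_lt.2 hu1, Int.ofNat_lt.2 hu2]
  rw [ht0, mul_zero] at ht
  have hu : u1 = u2 := by omega
  subst hu
  constructor
  · have : l1 * a = l2 * a := by linarith
    exact mul_right_cancel₀ (by positivity) this
  · rfl

lemma rep_exists (ha : 0 < a) (hd : 0 < d) (hgcd : Nat.gcd a d = 1) (y : ℤ) :
    ∃ l : ℤ, ∃ u : ℕ, u < a ∧ y = l * a + u * d := by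
  have hcop : IsCoprime (d : ℤ) (a : ℤ) := by
    rw [Int.isCoprime_iff_gcd_eq_one]
    simpa [Nat.gcd_comm] using hgcd
  obtain ⟨v, w, hvw⟩ := hcop
  set u0 : ℤ := (y * v) % a with hu0
  have hu0nn : 0 ≤ u0 := Int.emod_nonneg _ (by positivity)
  have hu0lt : u0 < a := Int.emod_lt_of_pos _ (by positivity)
  refine ⟨y * w + d * ((y * v) / a), u0.toNat, ?_, ?_⟩
  · omega
  · have h1 : (u0.toNat : ℤ) = u0 := Int.toNat_of_nonneg hu0nn
    rw [h1, hu0]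
    have h2 : y * v = a * ((y * v) / a) + (y * v) % a := (Int.mul_ediv_add_emod _ _).symm
    have h3 : y * (v * d + w * a) = y := by rw [hvw, mul_one]
    nlinarith [h2, h3]

lemma ceil_iff (k : ℕ) (hk : 0 < k) (u : ℕ) (l : ℤ) :
    (0 ≤ l ∧ (u : ℤ) ≤ k * l) ↔ (((u + k - 1) / k : ℕ) : ℤ) ≤ l := by
  set c : ℕ := (u + k - 1) / k with hc
  set M : ℕ := (u + k - 1) % k with hM
  have hdm : k * c + M = u + k - 1 := Nat.div_add_mod (u + k - 1) k
  have hmlt : M < k := Nat.mod_lt _ hk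
  have hkcz : (k : ℤ) * (c : ℤ) = (u : ℤ) + (k : ℤ) - 1 - (M : ℤ) := by
    have h1 : ((k * c + M : ℕ) : ℤ) = ((u + k - 1 : ℕ) : ℤ) := by rw [hdm]
    have h2 : ((u + k - 1 : ℕ) : ℤ) = (u : ℤ) + (k : ℤ) - 1 := by omega
    push_cast at h1
    linarith
  constructor
  · rintro ⟨hl0, hul⟩
    by_contra hcl
    push_neg at hcl
    have hlc : l ≤ (c : ℤ) - 1 := by omega
    have h3 : (k : ℤ) * l ≤ (k : ℤ) * ((c : ℤ) - 1) :=
      mul_le_mul_of_nonneg_left hlc (by positivity)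
    have h4 : (k : ℤ) * ((c : ℤ) - 1) = (k : ℤ) * (c : ℤ) - k := by ring
    omega
  · intro hcl
    have hc0 : (0:ℤ) ≤ c := by positivity
    refine ⟨le_trans hc0 hcl, ?_⟩
    have h3 : (k : ℤ) * c ≤ (k : ℤ) * l := mul_le_mul_of_nonneg_left hcl (by positivity)
    omega

lemma memS_char (ha : 0 < a) (hd : 0 < d) (hk : 0 < k) (hgcd : Nat.gcd a d = 1)
    (hS : S = {z : ℤ | ∃ c : Fin (k + 1) → ℕ,
      z = ∑ i, (c i : ℤ) * ((a : ℤ) + (i : ℕ) * (d : ℤ))})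
    (z : ℤ) (l : ℤ) (u : ℕ) (hu : u < a) (hz : z = l * a + u * d) :
    z ∈ S ↔ (((u + k - 1) / k : ℕ) : ℤ) ≤ l := by
  rw [← ceil_iff k hk u l, memS_iff a d k S hS]
  constructor
  · rintro ⟨lam, mu, hmu, hrep⟩
    have heq : (lam : ℤ) * a + mu * d = l * a + u * d := by rw [← hrep, hz]
    have hcop : IsCoprime (a : ℤ) (d : ℤ) := by
      rw [Int.isCoprime_iff_gcd_eq_one]; simpa using hgcd
    have hdvd : (a : ℤ) ∣ ((mu : ℤ) - u) * d := ⟨l - lam, by linarith⟩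
    obtain ⟨t, ht⟩ := hcop.dvd_of_dvd_mul_right hdvd
    have htnn : 0 ≤ t := by nlinarith [Int.ofNat_lt.2 hu, Int.ofNat_nonneg mu]
    have hlam : (lam : ℤ) = l - t * d := by
      have h1 : (lam : ℤ) * a - l * a = (u - mu) * d := by linarith
      have h2 : ((lam : ℤ) - l) * a = (-(t * d)) * a := by linear_combination h1 - d * ht
      have h3 : (lam : ℤ) - l = -(t * d) := mul_right_cancel₀ (by positivity) h2
      linarith
    have hmu2 : (mu : ℤ) ≤ (k : ℤ) * lam := by exact_mod_cast hmu
    have hklam : (k : ℤ) * lam = k * l - k * (t * d) := by rw [hlam]; ring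
    have hmu3 : (mu : ℤ) = u + a * t := by linarith
    have hnn1 : (0:ℤ) ≤ (a : ℤ) * t := mul_nonneg (by positivity) htnn
    have hnn2 : (0:ℤ) ≤ (k : ℤ) * (t * d) :=
      mul_nonneg (by positivity) (mul_nonneg htnn (by positivity))
    have hukl : (u : ℤ) ≤ (k : ℤ) * l := by linarith
    refine ⟨?_, hukl⟩
    by_contra hl
    push_neg at hl
    have : (k : ℤ) * l < 0 := mul_neg_of_pos_of_neg (by positivity) hl
    have hu0 : (0:ℤ) ≤ (u : ℤ) := by positivity
    linarith
  · rintro ⟨hl0, hul⟩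
    refine ⟨l.toNat, u, ?_, ?_⟩
    · have : ((u : ℤ)) ≤ (k : ℤ) * l.toNat := by rwa [Int.toNat_of_nonneg hl0]
      exact_mod_cast this
    · rw [hz, Int.toNat_of_nonneg hl0]

end SG

set_option maxHeartbeats 3000000 in
lemma keyC (a d k q : ℕ) (S : Set ℤ)
    (ha : 0 < a) (hd : 0 < d) (hk2 : 2 ≤ k) (hka : k + 1 ≤ a)
    (hgcd : Nat.gcd a d = 1) (haqk : a = q * k)
    (hS : S = {z : ℤ | ∃ c : Fin (k + 1) → ℕ,
      z = ∑ i, (c i : ℤ) * ((a : ℤ) + (i : ℕ) * (d : ℤ))})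
    (y : ℤ) :
    (if y ∈ S then (1:ℤ) else 0) - (if y - a ∈ S then 1 else 0)
      - (if y - ((a:ℤ) + k * d) ∈ S then 1 else 0)
      + (if y - (a:ℤ) - ((a:ℤ) + k * d) ∈ S then 1 else 0)
    = (if y = 0 then 1 else 0)
      + (∑ i ∈ Finset.Icc 1 (k-1), if y = (a:ℤ) + (i:ℕ) * d then (1:ℤ) else 0)
      - (if y = (q:ℤ) * ((a:ℤ) + k * d) then 1 else 0)
      - (∑ i ∈ Finset.Icc 1 (k-1),
          if y = (a:ℤ) + (i:ℕ) * d + (q:ℤ) * ((a:ℤ) + k * d) then (1:ℤ) else 0) := by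
  have hk : 0 < k := by omega
  have hq2 : 2 ≤ q := by
    by_contra hq
    push_neg at hq
    interval_cases q <;> omega
  have hqa : (q : ℤ) * k = a := by exact_mod_cast haqk.symm
  obtain ⟨l, u, hu, hy⟩ := rep_exists a d ha hd hgcd y
  set c : ℕ := (u + k - 1) / k with hc
  -- basic membership characterizations
  have hM1 : y ∈ S ↔ (c : ℤ) ≤ l := memS_char a d k S ha hd hk hgcd hS y l u hu hy
  have hM2 : y - a ∈ S ↔ (c : ℤ) ≤ l - 1 :=
    memS_char a d k S ha hd hk hgcd hS (y - a) (l-1) u hu (by rw [hy]; ring)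
  -- the uniqueness statements
  have hrepu : ∀ l2 : ℤ, ∀ u2 : ℕ, u2 < a → (y = l2 * a + u2 * d ↔ (l = l2 ∧ u = u2)) := by
    intro l2 u2 hu2
    constructor
    · intro h
      obtain ⟨h1, h2⟩ := rep_unique a d ha hd hgcd l l2 u u2 hu hu2 (by rw [← hy, h])
      exact ⟨h1, h2⟩
    · rintro ⟨rfl, rfl⟩; exact hy
  have hE0 : y = 0 ↔ (l = 0 ∧ u = 0) := by
    have := hrepu 0 0 ha
    simpa using this
  have hQ : (q:ℤ) * ((a:ℤ) + k * d) = ((q:ℤ) + d) * a + (0:ℕ) * d := by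
    push_cast
    linear_combination (d : ℤ) * hqa
  have hEQ : y = (q:ℤ) * ((a:ℤ) + k * d) ↔ (l = (q:ℤ) + d ∧ u = 0) := by
    rw [hQ]
    exact hrepu ((q:ℤ)+d) 0 ha
  -- the two delta sums
  have hdsum : ∀ L : ℤ, (∑ i ∈ Finset.Icc 1 (k-1),
        if (l = L ∧ u = i) then (1:ℤ) else 0)
      = if (l = L ∧ 1 ≤ u ∧ u ≤ k-1) then 1 else 0 := by
    intro L
    by_cases hl : l = L
    · simp only [hl, true_and]
      rw [Finset.sum_ite_eq (Finset.Icc 1 (k-1)) u (fun _ => (1:ℤ))]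
      simp [Finset.mem_Icc]
    · simp [hl]
  have hs1 : (∑ i ∈ Finset.Icc 1 (k-1), if y = (a:ℤ) + (i:ℕ) * d then (1:ℤ) else 0)
      = if (l = 1 ∧ 1 ≤ u ∧ u ≤ k-1) then 1 else 0 := by
    rw [← hdsum 1]
    apply Finset.sum_congr rfl
    intro i hi
    rw [Finset.mem_Icc] at hi
    have hia : i < a := by omega
    have h' := hrepu 1 i hia
    rw [show (1:ℤ)*a + (i:ℕ)*d = (a:ℤ) + (i:ℕ)*d by ring] at h'
    simp only [h']
  have hs2 : (∑ i ∈ Finset.Icc 1 (k-1),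
        if y = (a:ℤ) + (i:ℕ) * d + (q:ℤ) * ((a:ℤ) + k * d) then (1:ℤ) else 0)
      = if (l = (q:ℤ) + d + 1 ∧ 1 ≤ u ∧ u ≤ k-1) then 1 else 0 := by
    rw [← hdsum ((q:ℤ) + d + 1)]
    apply Finset.sum_congr rfl
    intro i hi
    rw [Finset.mem_Icc] at hi
    have hia : i < a := by omega
    have h' := hrepu ((q:ℤ)+d+1) i hia
    rw [show ((q:ℤ)+d+1)*a + (i:ℕ)*d = (a:ℤ) + (i:ℕ)*d + (q:ℤ) * ((a:ℤ) + k * d)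
        by linear_combination (-(d:ℤ)) * hqa] at h'
    simp only [h']
  by_cases hku : k ≤ u
  · -- u ≥ k
    have hukk : u - k < a := by omega
    have hcast : ((u - k : ℕ) : ℤ) = (u:ℤ) - k := by omega
    have hM3 : y - ((a:ℤ) + k*d) ∈ S ↔ (((u - k + k - 1)/k : ℕ) : ℤ) ≤ l - 1 :=
      memS_char a d k S ha hd hk hgcd hS _ (l-1) (u-k) hukk (by rw [hy, hcast]; ring)
    have hM4 : y - (a:ℤ) - ((a:ℤ) + k*d) ∈ S ↔ (((u - k + k - 1)/k : ℕ) : ℤ) ≤ l - 2 :=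
      memS_char a d k S ha hd hk hgcd hS _ (l-2) (u-k) hukk (by rw [hy, hcast]; ring)
    have hcc : c = (u - k + k - 1)/k + 1 := by
      have h1 : u + k - 1 = (u - k + k - 1) + k := by omega
      rw [hc, h1, Nat.add_div_right _ hk]
    have hcz : (c:ℤ) = (((u - k + k - 1)/k : ℕ) : ℤ) + 1 := by exact_mod_cast hcc
    rw [hs1, hs2]
    simp only [hM1, hM2, hM3, hM4, hE0, hEQ]
    split_ifs <;> omega
  · -- u < k
    push_neg at hku
    set u2 : ℕ := u + a - k with hu2def
    have hu2a : u2 < a := by omega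
    have hcast : ((u2 : ℕ) : ℤ) = (u:ℤ) + a - k := by omega
    have hM3 : y - ((a:ℤ) + k*d) ∈ S ↔ (((u2 + k - 1)/k : ℕ) : ℤ) ≤ l - 1 - d :=
      memS_char a d k S ha hd hk hgcd hS _ (l-1-d) u2 hu2a (by rw [hy, hcast]; ring)
    have hM4 : y - (a:ℤ) - ((a:ℤ) + k*d) ∈ S ↔ (((u2 + k - 1)/k : ℕ) : ℤ) ≤ l - 2 - d :=
      memS_char a d k S ha hd hk hgcd hS _ (l-2-d) u2 hu2a (by rw [hy, hcast]; ring)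
    have hc3 : (u2 + k - 1)/k = c + (q - 1) := by
      have h2 : (q-1)*k = q*k - k := by rw [Nat.sub_mul, one_mul]
      have h1 : u2 + k - 1 = (u + k - 1) + (q-1) * k := by omega
      rw [h1, Nat.add_mul_div_right _ _ hk, hc]
    have hcz : (((u2 + k - 1)/k : ℕ) : ℤ) = (c:ℤ) + q - 1 := by
      rw [hc3]; omega
    rw [hs1, hs2]
    simp only [hM1, hM2, hM3, hM4, hE0, hEQ]
    rcases Nat.eq_zero_or_pos u with hu0 | hu1
    · have hcc : c = 0 := by
        rw [hc, hu0]
        exact Nat.div_eq_of_lt (by omega)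
      have hccz : (c:ℤ) = 0 := by exact_mod_cast hcc
      split_ifs <;> omega
    · have hcc : c = 1 := by
        rw [hc]
        exact Nat.div_eq_of_lt_le (by omega) (by omega)
      have hccz : (c:ℤ) = 1 := by exact_mod_cast hcc
      split_ifs <;> omega

lemma ite_and_mul (P R : Prop) (z : ℤ) :
    (if (P ∧ R) then z else 0) = (if R then (1:ℤ) else 0) * ((if P then (1:ℤ) else 0) * z) := by
  by_cases hP : P <;> by_cases hR : R <;> simp [hP, hR]

lemma pick (S : Set ℤ) (h0 : (0:ℤ) ∈ S) (hnn : ∀ z ∈ S, (0:ℤ) ≤ z)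
    (x p : ℤ) (hp : 0 ≤ p) :
    (∑ c ∈ Finset.Icc 0 x,
      (if x - c = p then (1:ℤ) else 0) * ((if c ∈ S then (1:ℤ) else 0) * mobiusRed S c))
      = mobiusRed S (x - p) := by
  have h1 : ∀ c ∈ Finset.Icc 0 x,
      (if x - c = p then (1:ℤ) else 0) * ((if c ∈ S then (1:ℤ) else 0) * mobiusRed S c)
      = if c = x - p then ((if c ∈ S then (1:ℤ) else 0) * mobiusRed S c) else 0 := by
    intro c _
    have : (x - c = p) ↔ (c = x - p) := by omega
    simp only [this]
    split_ifs <;> ring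
  rw [Finset.sum_congr rfl h1, Finset.sum_ite_eq' (Finset.Icc 0 x) (x - p)
    (fun c => (if c ∈ S then (1:ℤ) else 0) * mobiusRed S c)]
  by_cases hmem : x - p ∈ S
  · have h2 : 0 ≤ x - p := hnn _ hmem
    rw [if_pos (by rw [Finset.mem_Icc]; omega), if_pos hmem, one_mul]
  · have h3 : mobiusRed S (x - p) = 0 := mu_not_mem S h0 hmem
    rw [h3]
    split_ifs <;> ring

lemma shiftG (S : Set ℤ) (hnn : ∀ z ∈ S, (0:ℤ) ≤ z) (x u : ℤ) (hu : 0 ≤ u) :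
    (∑ c ∈ Finset.Icc 0 x, (if ((c:ℤ) ∈ S ∧ x - u - c ∈ S) then mobiusRed S c else 0))
      = ∑ c ∈ Finset.Icc 0 (x - u), (if ((c:ℤ) ∈ S ∧ (x - u) - c ∈ S) then mobiusRed S c else 0) := by
  symm
  apply Finset.sum_subset (Finset.Icc_subset_Icc_right (by omega))
  intro c hc hnc
  rw [Finset.mem_Icc] at hc hnc
  rw [if_neg]
  rintro ⟨-, h2⟩
  have := hnn _ h2
  omega

set_option maxHeartbeats 1000000 in
theorem mobius_recursion_arithmetic_r_eq_zero
    (a d k q r : ℕ) (ha : 0 < a) (hd : 0 < d) (hk2 : 2 ≤ k) (hka : k ≤ a - 1)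
    (hgcd : Nat.gcd a d = 1)
    (hqr : a = q * k + r) (hrk : r < k) (hr : r = 0)
    (S : Set ℤ)
    (hS : S = {z : ℤ | ∃ c : Fin (k + 1) → ℕ,
      z = ∑ i, (c i : ℤ) * ((a : ℤ) + (i : ℕ) * (d : ℤ))})
    (x : ℤ)
    (hx : x ∉ ({0, (a : ℤ), (a : ℤ) + k * d, (a : ℤ) + ((a : ℤ) + k * d)} : Set ℤ)) :
    mobiusRed S x =
      mobiusRed S (x - q * ((a : ℤ) + k * d)) +
        ∑ i ∈ Finset.Icc 1 (k - 1),
          (mobiusRed S (x - ((a : ℤ) + (i : ℕ) * d) - q * ((a : ℤ) + k * d)) -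
            mobiusRed S (x - ((a : ℤ) + (i : ℕ) * d))) := by
  have h0 := zero_memS a d k S hS
  have hnn := nonneg_memS a d k S hS
  have hadd := add_memS a d k S hS
  have hka' : k + 1 ≤ a := by omega
  have haqk : a = q * k := by omega
  simp only [Set.mem_insert_iff, Set.mem_singleton_iff, not_or] at hx
  obtain ⟨hx1, hx2, hx3, hx4⟩ := hx
  set Q : ℤ := (q:ℤ) * ((a:ℤ) + k * d) with hQdef
  have hQnn : 0 ≤ Q := by positivity
  -- the four convolution sums vanish
  have hG : ∀ u : ℤ, 0 ≤ u → x - u ≠ 0 →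
      (∑ c ∈ Finset.Icc 0 x, (if ((c:ℤ) ∈ S ∧ x - u - c ∈ S) then mobiusRed S c else 0)) = 0 := by
    intro u hu hne
    rw [shiftG S hnn x u hu, conv_eq S h0 hnn hadd (x - u), if_neg hne]
  have hG1 : (∑ c ∈ Finset.Icc 0 x,
      (if ((c:ℤ) ∈ S ∧ x - c ∈ S) then mobiusRed S c else 0)) = 0 := by
    rw [conv_eq S h0 hnn hadd x, if_neg hx1]
  have hG2 := hG ((a:ℤ)) (by positivity) (by omega)
  have hG3 := hG ((a:ℤ) + k * d) (by positivity) (by omega)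
  have hG4 := hG ((a:ℤ) + ((a:ℤ) + k * d)) (by positivity) (by omega)
  -- per-element identity from keyC
  have hper : ∀ c ∈ Finset.Icc 0 x,
      (if ((c:ℤ) ∈ S ∧ x - c ∈ S) then mobiusRed S c else 0)
      - (if ((c:ℤ) ∈ S ∧ x - (a:ℤ) - c ∈ S) then mobiusRed S c else 0)
      - (if ((c:ℤ) ∈ S ∧ x - ((a:ℤ) + k * d) - c ∈ S) then mobiusRed S c else 0)
      + (if ((c:ℤ) ∈ S ∧ x - ((a:ℤ) + ((a:ℤ) + k * d)) - c ∈ S) then mobiusRed S c else 0)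
      = (if x - c = 0 then (1:ℤ) else 0) * ((if c ∈ S then (1:ℤ) else 0) * mobiusRed S c)
        + (∑ i ∈ Finset.Icc 1 (k-1),
            (if x - c = (a:ℤ) + (i:ℕ) * d then (1:ℤ) else 0)
              * ((if c ∈ S then (1:ℤ) else 0) * mobiusRed S c))
        - (if x - c = Q then (1:ℤ) else 0) * ((if c ∈ S then (1:ℤ) else 0) * mobiusRed S c)
        - (∑ i ∈ Finset.Icc 1 (k-1),
            (if x - c = (a:ℤ) + (i:ℕ) * d + Q then (1:ℤ) else 0)
              * ((if c ∈ S then (1:ℤ) else 0) * mobiusRed S c)) := by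
    intro c _
    have hkey := keyC a d k q S ha hd hk2 hka' hgcd haqk hS (x - c)
    simp only [show x - (a:ℤ) - c = x - c - (a:ℤ) by ring,
      show x - ((a:ℤ) + k * d) - c = x - c - ((a:ℤ) + k * d) by ring,
      show x - ((a:ℤ) + ((a:ℤ) + k * d)) - c = x - c - (a:ℤ) - ((a:ℤ) + k * d) by ring,
      ite_and_mul]
    rw [← Finset.sum_mul, ← Finset.sum_mul]
    linear_combination ((if c ∈ S then (1:ℤ) else 0) * mobiusRed S c) * hkey
  -- sum the per-element identity
  have hsum : (0:ℤ)
      = mobiusRed S x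
        + (∑ i ∈ Finset.Icc 1 (k-1), mobiusRed S (x - ((a:ℤ) + (i:ℕ) * d)))
        - mobiusRed S (x - Q)
        - (∑ i ∈ Finset.Icc 1 (k-1), mobiusRed S (x - ((a:ℤ) + (i:ℕ) * d + Q))) := by
    have hbig : (∑ c ∈ Finset.Icc 0 x,
        ((if ((c:ℤ) ∈ S ∧ x - c ∈ S) then mobiusRed S c else 0)
        - (if ((c:ℤ) ∈ S ∧ x - (a:ℤ) - c ∈ S) then mobiusRed S c else 0)
        - (if ((c:ℤ) ∈ S ∧ x - ((a:ℤ) + k * d) - c ∈ S) then mobiusRed S c else 0)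
        + (if ((c:ℤ) ∈ S ∧ x - ((a:ℤ) + ((a:ℤ) + k * d)) - c ∈ S) then mobiusRed S c else 0)))
        = 0 := by
      simp only [Finset.sum_add_distrib, Finset.sum_sub_distrib]
      rw [hG1, hG2, hG3, hG4]
      ring
    rw [Finset.sum_congr rfl hper] at hbig
    simp only [Finset.sum_add_distrib, Finset.sum_sub_distrib] at hbig
    rw [pick S h0 hnn x 0 le_rfl] at hbig
    rw [pick S h0 hnn x Q hQnn] at hbig
    have hswap1 : (∑ c ∈ Finset.Icc 0 x, ∑ i ∈ Finset.Icc 1 (k-1),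
          (if x - c = (a:ℤ) + (i:ℕ) * d then (1:ℤ) else 0)
            * ((if c ∈ S then (1:ℤ) else 0) * mobiusRed S c))
        = ∑ i ∈ Finset.Icc 1 (k-1), mobiusRed S (x - ((a:ℤ) + (i:ℕ) * d)) := by
      rw [Finset.sum_comm]
      apply Finset.sum_congr rfl
      intro i _
      exact pick S h0 hnn x ((a:ℤ) + (i:ℕ) * d) (by positivity)
    have hswap2 : (∑ c ∈ Finset.Icc 0 x, ∑ i ∈ Finset.Icc 1 (k-1),
          (if x - c = (a:ℤ) + (i:ℕ) * d + Q then (1:ℤ) else 0)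
            * ((if c ∈ S then (1:ℤ) else 0) * mobiusRed S c))
        = ∑ i ∈ Finset.Icc 1 (k-1), mobiusRed S (x - ((a:ℤ) + (i:ℕ) * d + Q)) := by
      rw [Finset.sum_comm]
      apply Finset.sum_congr rfl
      intro i _
      exact pick S h0 hnn x ((a:ℤ) + (i:ℕ) * d + Q) (by positivity)
    rw [hswap1, hswap2] at hbig
    rw [← hbig]
    simp
  -- rearrange to the desired form
  have hfin : (∑ i ∈ Finset.Icc 1 (k-1),
        (mobiusRed S (x - ((a:ℤ) + (i:ℕ) * d) - Q) - mobiusRed S (x - ((a:ℤ) + (i:ℕ) * d))))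
      = (∑ i ∈ Finset.Icc 1 (k-1), mobiusRed S (x - ((a:ℤ) + (i:ℕ) * d + Q)))
        - (∑ i ∈ Finset.Icc 1 (k-1), mobiusRed S (x - ((a:ℤ) + (i:ℕ) * d))) := by
    rw [← Finset.sum_sub_distrib]
    apply Finset.sum_congr rfl
    intro i _
    rw [show x - ((a:ℤ) + (i:ℕ) * d) - Q = x - ((a:ℤ) + (i:ℕ) * d + Q) by ring]
  rw [hfin]
  linarith [hsum]
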